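/- Skew-symmetry of the double action: for every representation (U, ρ_U) of g, one has ϱ_{ϱ_U} + ϱ_{ϱ_U}(γ_{g,g} ⊙ 𝟙_U) = 0, where γ_{g,g} is the braiding intertwiner on g ⊗ g. -/

import Mathlib

noncomputable section

namespace LMI

/-- A graded vector space, modelled by a homogeneous basis with degree function. -/
structure GVS where
  B : Type
  deg : B → ℤ

/-- Tensor product of graded vector spaces (product of bases, sum of degrees). -/
def GVS.tens (U V : GVS) : GVS := ⟨U.B × V.B, fun p => U.deg p.1 + V.deg p.2⟩

variable (K : Type) [Field K]

/-- The sign (-1)^z. -/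
def ksign (z : ℤ) : K := (-1 : K) ^ z.natAbs

/-- The Koszul sign of a permutation acting on homogeneous elements of degrees `d`. -/
def kperm {n : ℕ} (d : Fin n → ℤ) (σ : Equiv.Perm (Fin n)) : K :=
  ∏ p ∈ Finset.univ.filter (fun p : Fin n × Fin n => p.1 < p.2 ∧ σ p.2 < σ p.1),
    ksign K (d p.1 * d p.2)

/-- The signature of a permutation, as an element of K. -/
def psign {n : ℕ} (σ : Equiv.Perm (Fin n)) : K := ((Equiv.Perm.sign σ : ℤ) : K)

/-- `(a, n-a)`-shuffles: permutations increasing on the first `a` and the last `n-a` positions. -/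
def IsShuffle {n : ℕ} (a : ℕ) (σ : Equiv.Perm (Fin n)) : Prop :=
  ∀ k l : Fin n, k < l → ((l : ℕ) < a ∨ a ≤ (k : ℕ)) → σ k < σ l

instance {n a : ℕ} : DecidablePred (IsShuffle (n := n) a) := fun σ => by
  unfold IsShuffle; infer_instance

def shuffles (n a : ℕ) : Finset (Equiv.Perm (Fin n)) :=
  Finset.univ.filter (IsShuffle a)

/-- Total degree of a family of basis elements. -/
def dsum (g : GVS) {m : ℕ} (ξ : Fin m → g.B) : ℤ := ∑ k, g.deg (ξ k)

def firstPart {β : Type} {n : ℕ} (a : Fin (n + 1)) (ξ : Fin n → β) : Fin (a : ℕ) → β :=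
  fun t => ξ ⟨t, by have h1 := t.isLt; have h2 := a.isLt; omega⟩

def lastPart {β : Type} {n : ℕ} (a : Fin (n + 1)) (ξ : Fin n → β) : Fin (n - (a : ℕ)) → β :=
  fun t => ξ ⟨(a : ℕ) + t, by have h1 := t.isLt; have h2 := a.isLt; omega⟩

/-- A "pre-intertwiner" `U ⇝ V`: a family of maps `g^{⊗n} ⊗ U → V`, given on bases. -/
abbrev Pre (g U V : GVS) : Type := (i : ℕ) → (Fin i → g.B) → U.B → (V.B →₀ K)

/-- A family of structure maps `ℓ^i : g^{⊗i} → g`, given on bases. -/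
abbrev LFam (g : GVS) : Type := (i : ℕ) → (Fin i → g.B) → (g.B →₀ K)

/-- Tensor product of two vectors, in basis coordinates. -/
def tensF {U V : GVS} (x : U.B →₀ K) (y : V.B →₀ K) : (U.tens V).B →₀ K :=
  x.sum fun b c => y.sum fun b' c' => Finsupp.single (b, b') (c * c')

/-- Linear extension of a map defined on a basis. -/
def lf {α β : Type} (φ : α → (β →₀ K)) (x : α →₀ K) : β →₀ K :=
  x.sum fun a c => c • φ a

/-- Juxtaposition (composition) of intertwiners:
`(G F)^i := Σ_{j̃+k=i} (-1)^{(|G|-j̃)k̃} G^j (1_{j̃} ⊗ F^k)(Σ_{j̃,k̃} ⊗ 1_U)`. -/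
def juxt {g U V W : GVS} (nG nF : ℤ) (G : Pre K g V W) (F : Pre K g U V) : Pre K g U W :=
  fun n ξ u =>
    ∑ a : Fin (n + 1), ∑ σ ∈ shuffles n (a : ℕ),
      (psign K σ * kperm K (g.deg ∘ ξ) σ
        * ksign K ((nF - ((n : ℤ) - ((a : ℕ) : ℤ))) * dsum g (firstPart a (ξ ∘ σ)))
        * ksign K ((nG - ((a : ℕ) : ℤ)) * ((n : ℤ) - ((a : ℕ) : ℤ))))
      • lf K (G (a : ℕ) (firstPart a (ξ ∘ σ))) (F (n - (a : ℕ)) (lastPart a (ξ ∘ σ)) u)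

/-- The odot (monoidal) product of intertwiners:
`(F ⊙ G)^i := Σ (-1)^{(|F|-j̃)k̃}(F^j ⊗ G^k)(1_{j̃} ⊗ s_{k̃,U} ⊗ 1_V)(Σ_{j̃,k̃} ⊗ 1_{U⊗V})`. -/
def odot {g U U' V V' : GVS} (nF nG : ℤ) (F : Pre K g U U') (G : Pre K g V V') :
    Pre K g (U.tens V) (U'.tens V') :=
  fun n ξ p =>
    ∑ a : Fin (n + 1), ∑ σ ∈ shuffles n (a : ℕ),
      (psign K σ * kperm K (g.deg ∘ ξ) σ
        * ksign K (U.deg p.1 * dsum g (lastPart a (ξ ∘ σ)))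
        * ksign K ((nG - ((n : ℤ) - ((a : ℕ) : ℤ))) * (dsum g (firstPart a (ξ ∘ σ)) + U.deg p.1))
        * ksign K ((nF - ((a : ℕ) : ℤ)) * ((n : ℤ) - ((a : ℕ) : ℤ))))
      • tensF K (F (a : ℕ) (firstPart a (ξ ∘ σ)) p.1) (G (n - (a : ℕ)) (lastPart a (ξ ∘ σ)) p.2)

/-- The identity intertwiner `𝟙_U`. -/
def oneI {g : GVS} (U : GVS) : Pre K g U U :=
  fun n _ u => if n = 0 then Finsupp.single u 1 else 0

/-- The homotopy components `ϱ_F^i := (-1)^i F^{i+1} : g^{⊗i} ⊗ U → V[|F|-i]`. -/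
def varr {g U V : GVS} (F : Pre K g U V) : Pre K g (g.tens U) V :=
  fun n ξ p => ksign K ((n : ℤ) + 1) • F (n + 1) (Fin.snoc ξ p.1) p.2

/-- The intertwiner `ℓ_U : U ⇝ (g ⊗ U)[2]` with components `ℓ^{ĩ} ⊗ 1_U`. -/
def ellU {g : GVS} (L : LFam K g) (U : GVS) : Pre K g U (g.tens U) :=
  fun n ξ u => (L n ξ).sum fun y c => Finsupp.single (y, u) c

/-- The braiding intertwiner `γ_{U,V}` with sole component the Koszul swap. -/
def gammaI {g : GVS} (U V : GVS) : Pre K g (U.tens V) (V.tens U) :=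
  fun n _ p => if n = 0 then ksign K (U.deg p.1 * V.deg p.2) • Finsupp.single (p.2, p.1) 1 else 0

/-- The adjoint representation `ρ_g^i = (-1)^{ĩ} ℓ^i`. -/
def adj {g : GVS} (L : LFam K g) : Pre K g g g :=
  fun n ξ x => ksign K (n : ℤ) • L (n + 1) (Fin.snoc ξ x)

/-- The action map `ϱ_U : g ⊙ U ⇝ U` with components `ϱ_U^i = (-1)^{ĩ} ρ_U^{i+1}`. -/
def actU {g U : GVS} (ρU : Pre K g U U) : Pre K g (g.tens U) U := - varr K ρU

/-- The hom-differential `[ρ,F] := ρ_V F - (-1)^{|F|} F ρ_U - ϱ_F ℓ_U`. -/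
def brkt {g U V : GVS} (L : LFam K g) (ρU : Pre K g U U) (ρV : Pre K g V V)
    (nf : ℤ) (F : Pre K g U V) : Pre K g U V :=
  juxt K 1 nf ρV F - ksign K nf • juxt K nf 1 F ρU
    - juxt K (nf - 1) 2 (varr K F) (ellU K L U)

/-- The tensor product structure map `ρ_{U,V} := ρ_U ⊙ 𝟙_V + 𝟙_U ⊙ ρ_V`. -/
def rhoT {g U V : GVS} (ρU : Pre K g U U) (ρV : Pre K g V V) :
    Pre K g (U.tens V) (U.tens V) :=
  odot K 1 0 ρU (oneI K V) + odot K 0 1 (oneI K U) ρV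

/-- `F` is an intertwiner `U ⇝ V[nf]`: graded of degree `nf` and fully
(Koszul-)skew-symmetric in the `g`-entries. -/
def IsIntertwiner (g U V : GVS) (nf : ℤ) (F : Pre K g U V) : Prop :=
  (∀ (n : ℕ) (ξ : Fin n → g.B) (u : U.B), ∀ b ∈ (F n ξ u).support,
      V.deg b = dsum g ξ + U.deg u + nf - n) ∧
  (∀ (n : ℕ) (ξ : Fin n → g.B) (u : U.B) (σ : Equiv.Perm (Fin n)),
      F n (ξ ∘ σ) u = (psign K σ * kperm K (g.deg ∘ ξ) σ) • F n ξ u)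

/-- The generalised Jacobi identity `Σ_{j̃+k=i} (-1)^{j̃} ℓ^j(ℓ^k ⊗ 1_{j̃})Σ_{k,j̃} = 0`. -/
def GJacobi (g : GVS) (L : LFam K g) : Prop :=
  ∀ (n : ℕ) (ξ : Fin n → g.B),
    (∑ a : Fin (n + 1), ∑ σ ∈ shuffles n (a : ℕ),
      (psign K σ * kperm K (g.deg ∘ ξ) σ * ksign K ((n : ℤ) - ((a : ℕ) : ℤ)))
      • ((L (a : ℕ) (firstPart a (ξ ∘ σ))).sum
          fun y c => c • L (n - (a : ℕ) + 1) (Fin.cons y (lastPart a (ξ ∘ σ))))) = 0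

/-- `(g, L)` is a homotopy Lie algebra: brackets `ℓ^i : Λ^i g → g[2-i]` (`i ≥ 1`)
satisfying the generalised Jacobi identity. -/
def IsHLA (g : GVS) (L : LFam K g) : Prop :=
  (L 0 = fun _ => 0) ∧
  (∀ (i : ℕ) (ξ : Fin i → g.B), ∀ b ∈ (L i ξ).support, g.deg b = dsum g ξ + 2 - i) ∧
  (∀ (i : ℕ) (ξ : Fin i → g.B) (σ : Equiv.Perm (Fin i)),
      L i (ξ ∘ σ) = (psign K σ * kperm K (g.deg ∘ ξ) σ) • L i ξ) ∧
  GJacobi K g L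

/-- `(U, ρU)` is a representation of `(g, L)`: a degree 1 intertwiner
with `ρ_U ρ_U = ϱ_{ρ_U} ℓ_U`. -/
def IsRep (g : GVS) (L : LFam K g) (U : GVS) (ρU : Pre K g U U) : Prop :=
  IsIntertwiner K g U U 1 ρU ∧
  juxt K 1 1 ρU ρU = juxt K 0 2 (varr K ρU) (ellU K L U)

/-- Transport an intertwiner along an identification of domain bases. -/
def transp {g U U' V : GVS} (e : U.B ≃ U'.B) (F : Pre K g U' V) : Pre K g U V :=
  fun n ξ u => F n ξ (e u)

/-- Transport an intertwiner along an identification of codomain bases. -/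
def transpC {g U V V' : GVS} (e : V.B ≃ V'.B) (F : Pre K g U V) : Pre K g U V' :=
  fun n ξ u => Finsupp.equivMapDomain e (F n ξ u)

/-!
The braiding `γ_{g,g} ⊙ 𝟙_U` has a single component, of arity zero: the Koszul swap
`x ⊗ y ⊗ u ↦ (-1)^{|x||y|} y ⊗ x ⊗ u`. Precomposing `ϱ_{ϱ_U}` with it therefore just swaps
its two outer `g`-arguments. Moreover `ϱ_{ϱ_U}^n(ξ, x, y, u) = ρ_U^{n+2}(ξ, x, y, u)`, because
the signs `(-1)^{n+1}`, `(-1)^{n+2}` and the sign of `ϱ_U = -ϱ_{ρ_U}` cancel. So the identity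
is the Koszul skew-symmetry of `ρ_U` under the transposition of its last two `g`-arguments.
-/

section Signs

lemma ksign_zero : ksign K 0 = 1 := by simp [ksign]

lemma ksign_mul_self (z : ℤ) : ksign K z * ksign K z = 1 := by
  rw [ksign, ← pow_add, ← two_mul, pow_mul]
  norm_num

lemma ksign_add_one_mul_add_two (n : ℕ) :
    ksign K ((n : ℤ) + 1) * ksign K ((n : ℤ) + 2) = -1 := by
  rw [ksign, ksign, show ((n : ℤ) + 1).natAbs = n + 1 by omega,
    show ((n : ℤ) + 2).natAbs = n + 2 by omega, ← pow_add,
    show n + 1 + (n + 2) = 2 * (n + 1) + 1 by omega, pow_succ, pow_mul]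
  norm_num

lemma psign_one {n : ℕ} : psign K (1 : Equiv.Perm (Fin n)) = 1 := by simp [psign]

lemma kperm_one {n : ℕ} (d : Fin n → ℤ) : kperm K d 1 = 1 := by
  rw [kperm, Finset.filter_false_of_mem, Finset.prod_empty]
  rintro p - ⟨hlt, hgt⟩
  exact hlt.asymm hgt

lemma shuffles_self (n : ℕ) : shuffles n n = {1} := by
  ext σ
  simp only [shuffles, IsShuffle, Finset.mem_filter, Finset.mem_univ, true_and,
    Finset.mem_singleton]
  constructor
  · intro h
    exact Equiv.ext <| congrFun <| StrictMono.eq_id fun k l hkl => h k l hkl (Or.inl l.isLt)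
  · rintro rfl k l hkl -
    exact hkl

end Signs

section Swap

variable {β : Type} {n : ℕ}

abbrev swapLast (n : ℕ) : Equiv.Perm (Fin (n + 2)) :=
  Equiv.swap (Fin.castSucc (Fin.last n)) (Fin.last (n + 1))

lemma snoc_snoc_comp_swapLast (ξ : Fin n → β) (x y : β) :
    (Fin.snoc (Fin.snoc ξ x) y : Fin (n + 2) → β) ∘ swapLast n
      = Fin.snoc (Fin.snoc ξ y) x := by
  funext i
  refine Fin.lastCases ?_ (fun j => Fin.lastCases ?_ (fun k => ?_) j) i
  · simp [Equiv.swap_apply_right]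
  · simp [Equiv.swap_apply_left]
  · rw [Function.comp_apply, Equiv.swap_apply_of_ne_of_ne]
    · simp
    · simp [k.castSucc_lt_last.ne]
    · exact (Fin.castSucc_lt_last _).ne

lemma sign_swapLast : Equiv.Perm.sign (swapLast n) = -1 :=
  Equiv.Perm.sign_swap (Fin.castSucc_lt_last _).ne

lemma kperm_swapLast (d : Fin (n + 2) → ℤ) :
    kperm K d (swapLast n) = ksign K (d (Fin.castSucc (Fin.last n)) * d (Fin.last (n + 1))) := by
  suffices h : Finset.univ.filter (fun p : Fin (n + 2) × Fin (n + 2) =>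
      p.1 < p.2 ∧ swapLast n p.2 < swapLast n p.1)
        = {(Fin.castSucc (Fin.last n), Fin.last (n + 1))} by
    rw [kperm, h, Finset.prod_singleton]
  ext ⟨i, j⟩
  simp only [Finset.mem_filter_univ, Finset.mem_singleton, Prod.mk.injEq]
  rw [Equiv.swap_apply_def, Equiv.swap_apply_def]
  have := i.isLt
  have := j.isLt
  split_ifs <;> simp only [Fin.lt_def, Fin.ext_iff, Fin.val_castSucc, Fin.val_last] at * <;> omega

end Swap

section ArityZero

variable {g U U' V V' W : GVS}

def IsArityZero (F : Pre K g U V) (f : U.B → V.B →₀ K) : Prop :=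
  ∀ n ξ u, F n ξ u = if n = 0 then f u else 0

lemma isArityZero_oneI : IsArityZero K (oneI K (g := g) U) fun u => Finsupp.single u 1 :=
  fun _ _ _ => rfl

lemma isArityZero_gammaI :
    IsArityZero K (gammaI K (g := g) U V)
      fun p => ksign K (U.deg p.1 * V.deg p.2) • Finsupp.single (p.2, p.1) 1 :=
  fun _ _ _ => rfl

lemma IsArityZero.transp {F : Pre K g U' V} {f : U'.B → V.B →₀ K} (hF : IsArityZero K F f)
    (e : U.B ≃ U'.B) : IsArityZero K (transp K e F) fun u => f (e u) :=
  fun n ξ u => hF n ξ (e u)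

lemma IsArityZero.transpC {F : Pre K g U V} {f : U.B → V.B →₀ K} (hF : IsArityZero K F f)
    (e : V.B ≃ V'.B) : IsArityZero K (transpC K e F) fun u => Finsupp.equivMapDomain e (f u) := by
  intro n ξ u
  simp only [LMI.transpC, hF n ξ u]
  split_ifs <;> simp

lemma tensF_single_single (b : U.B) (b' : V.B) (c c' : K) :
    tensF K (Finsupp.single b c) (Finsupp.single b' c') = Finsupp.single (b, b') (c * c') := by
  rw [tensF, Finsupp.sum_single_index, Finsupp.sum_single_index]
  · rfl
  · simp only [mul_zero]
    exact Finsupp.single_zero (M := K) _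
  · simp only [zero_mul]
    rw [Finsupp.sum_single_index] <;> exact Finsupp.single_zero (M := K) _

lemma IsArityZero.odot (nF nG : ℤ) {F : Pre K g U U'} {G : Pre K g V V'}
    {f : U.B → U'.B →₀ K} {f' : V.B → V'.B →₀ K} (hF : IsArityZero K F f)
    (hG : IsArityZero K G f') :
    IsArityZero K (LMI.odot K nF nG F G)
      fun p => ksign K (nG * U.deg p.1) • tensF K (f p.1) (f' p.2) := by
  intro n ξ p
  unfold LMI.odot
  split_ifs with hn
  · subst hn
    rw [Fin.sum_univ_one, show shuffles 0 ((0 : Fin 1) : ℕ) = {1} from shuffles_self 0,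
      Finset.sum_singleton, hF, hG]
    simp [psign_one, kperm_one, dsum, ksign_zero]
  · refine Finset.sum_eq_zero fun a _ => Finset.sum_eq_zero fun σ _ => ?_
    rcases Nat.eq_zero_or_pos (a : ℕ) with ha | ha
    · rw [hG, if_neg (by omega)]
      simp [tensF]
    · rw [hF, if_neg ha.ne']
      simp [tensF]

lemma juxt_apply_of_isArityZero (nG : ℤ) (G : Pre K g V W) {F : Pre K g U V}
    {f : U.B → V.B →₀ K} (hF : IsArityZero K F f) (n : ℕ) (ξ : Fin n → g.B) (u : U.B) :
    juxt K nG 0 G F n ξ u = lf K (G n ξ) (f u) := by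
  unfold juxt
  rw [Finset.sum_eq_single (Fin.last n)]
  · have hξ : firstPart (Fin.last n) (ξ ∘ ⇑(1 : Equiv.Perm (Fin n))) = ξ := rfl
    rw [show shuffles n (Fin.last n : ℕ) = {1} from shuffles_self n, Finset.sum_singleton, hF,
      if_pos (show n - (Fin.last n : ℕ) = 0 from Nat.sub_self n), hξ,
      show ((Fin.last n : ℕ) : ℤ) = n from rfl]
    simp [psign_one, kperm_one, ksign_zero]
  · intro a _ ha
    have : n - (a : ℕ) ≠ 0 := by
      have := Fin.val_ne_of_ne ha
      simp only [Fin.val_last] at this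
      omega
    refine Finset.sum_eq_zero fun σ _ => ?_
    rw [hF, if_neg this]
    simp [lf]
  · simp

end ArityZero

section DoubleAction

variable {g U V : GVS}

lemma lf_single {α β : Type} (φ : α → (β →₀ K)) (a : α) (c : K) :
    lf K φ (Finsupp.single a c) = c • φ a :=
  Finsupp.sum_single_index (zero_smul K _)

lemma isArityZero_gammaI_odot_oneI :
    IsArityZero K
      (transpC K (V := (g.tens g).tens U) (V' := g.tens (g.tens U)) (Equiv.prodAssoc g.B g.B U.B)
        (transp K (U := g.tens (g.tens U)) (U' := (g.tens g).tens U)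
          (Equiv.prodAssoc g.B g.B U.B).symm (odot K 0 0 (gammaI K (g := g) g g) (oneI K U))))
      fun p : g.B × g.B × U.B => Finsupp.single (α := (g.tens (g.tens U)).B)
        (p.2.1, p.1, p.2.2) (ksign K (g.deg p.1 * g.deg p.2.1)) := by
  intro n ξ p
  refine ((((isArityZero_gammaI K).odot K 0 0 (isArityZero_oneI K)).transp K _).transpC K _
    n ξ p).trans ?_
  congr 1
  obtain ⟨x, y, u⟩ := p
  beta_reduce
  erw [Finsupp.smul_single, tensF_single_single, Finsupp.smul_single,
    Finsupp.equivMapDomain_single]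
  congr 1
  simp only [zero_mul, ksign_zero, smul_eq_mul, mul_one, one_mul]
  rfl

lemma juxt_gammaI_odot_oneI_apply (nG : ℤ) (G : Pre K g (g.tens (g.tens U)) V) (n : ℕ)
    (ξ : Fin n → g.B) (x y : g.B) (u : U.B) :
    juxt K nG 0 G
      (transpC K (V := (g.tens g).tens U) (Equiv.prodAssoc g.B g.B U.B)
        (transp K (U := g.tens (g.tens U)) (U' := (g.tens g).tens U)
          (Equiv.prodAssoc g.B g.B U.B).symm (odot K 0 0 (gammaI K g g) (oneI K U)))) n ξ (x, y, u)
      = ksign K (g.deg x * g.deg y) • G n ξ (y, x, u) :=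
  (juxt_apply_of_isArityZero K nG G (isArityZero_gammaI_odot_oneI K) n ξ _).trans
    (lf_single K _ _ _)

lemma varr_actU_apply (ρU : Pre K g U U) (n : ℕ) (ξ : Fin n → g.B) (x y : g.B) (u : U.B) :
    varr K (actU K ρU) n ξ (x, y, u) = ρU (n + 2) (Fin.snoc (Fin.snoc ξ x) y) u := by
  change ksign K ((n : ℤ) + 1) • -(ksign K (((n + 1 : ℕ) : ℤ) + 1)
    • ρU (n + 2) (Fin.snoc (Fin.snoc ξ x) y) u) = _
  rw [show (((n + 1 : ℕ) : ℤ) + 1) = (n : ℤ) + 2 by push_cast; ring, smul_neg, smul_smul,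
    ksign_add_one_mul_add_two, neg_smul, one_smul, neg_neg]

lemma apply_snoc_snoc_swap {F : Pre K g U V}
    (hF : ∀ n (ξ : Fin n → g.B) u (σ : Equiv.Perm (Fin n)),
      F n (ξ ∘ σ) u = (psign K σ * kperm K (g.deg ∘ ξ) σ) • F n ξ u)
    {n : ℕ} (ξ : Fin n → g.B) (x y : g.B) (u : U.B) :
    F (n + 2) (Fin.snoc (Fin.snoc ξ y) x) u
      = -ksign K (g.deg x * g.deg y) • F (n + 2) (Fin.snoc (Fin.snoc ξ x) y) u := by
  rw [← snoc_snoc_comp_swapLast, hF, kperm_swapLast, psign, sign_swapLast]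
  simp

end DoubleAction

theorem double_act_skew {g U : GVS} (L : LFam K g)
    (ρU : Pre K g U U) (hU : IsRep K g L U ρU) :
    varr K (actU K ρU)
      + juxt K (-1) 0 (varr K (actU K ρU))
          (transpC K (Equiv.prodAssoc g.B g.B U.B)
            (transp K (Equiv.prodAssoc g.B g.B U.B).symm
              (odot K 0 0 (gammaI K g g) (oneI K U)))) = 0 := by
  funext n ξ p
  simp only [Pi.add_apply, Pi.zero_apply]
  obtain ⟨x, y, u⟩ := p
  -- `(x, y, u)` has type `(g.tens (g.tens U)).B` only after unfolding `GVS.tens`, hence `erw`.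
  erw [juxt_gammaI_odot_oneI_apply]
  rw [varr_actU_apply, varr_actU_apply, apply_snoc_snoc_swap K hU.1.2 ξ x y u, smul_smul,
    mul_neg, ksign_mul_self, neg_smul, one_smul, add_neg_cancel]

end LMI
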